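/- arXiv:2405.14924 — 6 statements merged into one kernel-verified Lean document; each statement's English description precedes it below -/
import Mathlib

section
/- For a in (0, 1/2], let f_a:[0,1] → ℝ be the piecewise linear function with f_a(0) = f_a(1) = 0, f_a(a) = 1, linear on [0,a] and on [a,1]. Define λ(t) = b · min(1/4, a²/t²) for t ∈ [0,1], where b = (1/a + 1/(1-a))². Then λ is the unique minimizer of (4/3)∫_0^1 ρ(s)^{3/2} ds over all measurable ρ:[0,1] → [0,∞) satisfying ∫_0^t (ρ(s) - λ(s)) ds ≥ 0 for all t ∈ [0,1], and the minimal value is (3 - 4a²)/(6(1-a)³a²). -/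
/-!
Write `Φ(x) = x^{3/2}`. Convexity of `Φ` gives `Φ(ρ) ≥ Φ(λ) + (3/2) √λ (ρ - λ)` pointwise, with
equality only where `ρ = λ`, so minimality and uniqueness both follow from
`∫₀¹ √λ (ρ - λ) ≥ 0`. Now `√λ(t) = (1/a + 1/(1-a)) min(1/2, a/t)`, and `min(1/2, a/t)` is `a` plus
the tail integral `∫ₜ¹` of the nonnegative density `a/s²·1_{s>2a}`. By Fubini, `∫₀¹ √λ (ρ - λ)` is
therefore a nonnegative combination of the running integrals `∫₀ˢ (ρ - λ)`, which the constraint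
makes nonnegative. The minimal value is a direct computation: `λ^{3/2}` is constant on `(0, 2a]`
and a multiple of `t⁻³` on `(2a, 1]`.
-/

open MeasureTheory Set

namespace GeodesicTwoPiece

lemma rpow_three_halves_eq_sqrt_pow {x : ℝ} (hx : 0 ≤ x) : x ^ ((3:ℝ)/2) = √x ^ 3 := by
  rw [Real.sqrt_eq_rpow, ← Real.rpow_natCast, ← Real.rpow_mul hx]
  norm_num

noncomputable def bregman (x y : ℝ) : ℝ :=
  x ^ ((3:ℝ)/2) - y ^ ((3:ℝ)/2) - 3/2 * (√y * (x - y))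

lemma bregman_eq {x y : ℝ} (hx : 0 ≤ x) (hy : 0 ≤ y) :
    bregman x y = (√x - √y) ^ 2 * (√x + √y / 2) := by
  rw [bregman, rpow_three_halves_eq_sqrt_pow hx, rpow_three_halves_eq_sqrt_pow hy]
  linear_combination (3/2 * √y) * Real.sq_sqrt hx - (3/2 * √y) * Real.sq_sqrt hy

lemma bregman_nonneg {x y : ℝ} (hx : 0 ≤ x) (hy : 0 ≤ y) : 0 ≤ bregman x y := by
  rw [bregman_eq hx hy]
  positivity

lemma eq_of_bregman_eq_zero {x y : ℝ} (hx : 0 ≤ x) (hy : 0 ≤ y) (h : bregman x y = 0) :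
    x = y := by
  rw [bregman_eq hx hy, mul_eq_zero, sq_eq_zero_iff, sub_eq_zero] at h
  have hsqrt : √x = √y := h.elim id fun h' => by
    linarith [Real.sqrt_nonneg x, Real.sqrt_nonneg y]
  rwa [Real.sqrt_inj hx hy] at hsqrt

section Bregman

variable {α : Type*} [MeasurableSpace α] {μ : Measure α} {ρ ℓ : α → ℝ}

lemma integral_bregman (hρ : Integrable (fun t => ρ t ^ ((3:ℝ)/2)) μ)
    (hℓ : Integrable (fun t => ℓ t ^ ((3:ℝ)/2)) μ)
    (hρℓ : Integrable (fun t => √(ℓ t) * (ρ t - ℓ t)) μ) :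
    ∫ t, bregman (ρ t) (ℓ t) ∂μ = ∫ t, ρ t ^ ((3:ℝ)/2) ∂μ - ∫ t, ℓ t ^ ((3:ℝ)/2) ∂μ
      - 3/2 * ∫ t, √(ℓ t) * (ρ t - ℓ t) ∂μ := by
  unfold bregman
  rw [integral_sub (f := fun t => ρ t ^ ((3:ℝ)/2) - ℓ t ^ ((3:ℝ)/2)) (hρ.sub hℓ)
    (hρℓ.const_mul _), integral_sub hρ hℓ, integral_const_mul]

lemma integral_rpow_three_halves_le (hρ0 : ∀ t, 0 ≤ ρ t) (hℓ0 : ∀ t, 0 ≤ ℓ t)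
    (hρ : Integrable (fun t => ρ t ^ ((3:ℝ)/2)) μ)
    (hℓ : Integrable (fun t => ℓ t ^ ((3:ℝ)/2)) μ)
    (hρℓ : Integrable (fun t => √(ℓ t) * (ρ t - ℓ t)) μ)
    (hpair : 0 ≤ ∫ t, √(ℓ t) * (ρ t - ℓ t) ∂μ) :
    ∫ t, ℓ t ^ ((3:ℝ)/2) ∂μ ≤ ∫ t, ρ t ^ ((3:ℝ)/2) ∂μ := by
  have := integral_nonneg (μ := μ) (f := fun t => bregman (ρ t) (ℓ t))
    fun t => bregman_nonneg (hρ0 t) (hℓ0 t)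
  rw [integral_bregman hρ hℓ hρℓ] at this
  linarith

lemma ae_eq_of_integral_rpow_three_halves_eq (hρ0 : ∀ t, 0 ≤ ρ t) (hℓ0 : ∀ t, 0 ≤ ℓ t)
    (hρ : Integrable (fun t => ρ t ^ ((3:ℝ)/2)) μ)
    (hℓ : Integrable (fun t => ℓ t ^ ((3:ℝ)/2)) μ)
    (hρℓ : Integrable (fun t => √(ℓ t) * (ρ t - ℓ t)) μ)
    (hpair : 0 ≤ ∫ t, √(ℓ t) * (ρ t - ℓ t) ∂μ)
    (heq : ∫ t, ρ t ^ ((3:ℝ)/2) ∂μ = ∫ t, ℓ t ^ ((3:ℝ)/2) ∂μ) :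
    ρ =ᵐ[μ] ℓ := by
  have hB : Integrable (fun t => bregman (ρ t) (ℓ t)) μ := (hρ.sub hℓ).sub (hρℓ.const_mul _)
  have hB_nonneg : 0 ≤ fun t => bregman (ρ t) (ℓ t) := fun t => bregman_nonneg (hρ0 t) (hℓ0 t)
  have hB0 : ∫ t, bregman (ρ t) (ℓ t) ∂μ = 0 :=
    le_antisymm (by rw [integral_bregman hρ hℓ hρℓ, heq]; linarith) (integral_nonneg hB_nonneg)
  filter_upwards [(integral_eq_zero_iff_of_nonneg hB_nonneg hB).mp hB0] with t ht
  exact eq_of_bregman_eq_zero (hρ0 t) (hℓ0 t) ht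

end Bregman

/-- Fubini: `∫ (g - c) d = ∫∫_{t < s} h(s) d(t) = ∫ h(s) (∫ₗˢ d) ds`. -/
lemma setIntegral_mul_nonneg_of_eq_add_tail {l r c : ℝ} {g h d : ℝ → ℝ} (hc : 0 ≤ c)
    (hh0 : ∀ s, 0 ≤ h s) (hh : IntegrableOn h (Ioc l r)) (hd : IntegrableOn d (Ioc l r))
    (hg : ∀ t ∈ Ioc l r, g t = c + ∫ s in Ioc t r, h s)
    (hD : ∀ t ∈ Icc l r, 0 ≤ ∫ s in Ioc l t, d s) :
    0 ≤ ∫ t in Ioc l r, g t * d t := by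
  set μ := volume.restrict (Ioc l r)
  set F : ℝ × ℝ → ℝ := {p | p.1 < p.2}.indicator fun p => d p.1 * h p.2 with hF_def
  have hF : Integrable F (μ.prod μ) :=
    (hd.mul_prod hh).indicator (measurableSet_lt measurable_fst measurable_snd)
  have hF_left : ∀ t ∈ Ioc l r, ∫ s, F (t, s) ∂μ = (g t - c) * d t := by
    intro t ht
    have hset : Ioc l r ∩ Ioi t = Ioc t r := by
      rw [Ioc_inter_Ioi, sup_eq_right.mpr ht.1.le]
    calc ∫ s, F (t, s) ∂μ = ∫ s in Ioc l r, (Ioi t).indicator h s * d t := by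
          congr 1; ext s
          by_cases hts : t < s <;> simp [hF_def, hts, mul_comm]
      _ = (g t - c) * d t := by
          rw [integral_mul_const, setIntegral_indicator measurableSet_Ioi, hset, hg t ht]
          ring
  have hF_right : ∀ s ∈ Ioc l r, 0 ≤ ∫ t, F (t, s) ∂μ := by
    intro s hs
    have hset : Ioc l r ∩ Iio s = Ioo l s := by
      ext t
      simp only [mem_inter_iff, mem_Ioc, mem_Iio, mem_Ioo]
      exact ⟨fun h => ⟨h.1.1, h.2⟩, fun h => ⟨⟨h.1, h.2.le.trans hs.2⟩, h.2⟩⟩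
    calc 0 ≤ h s * ∫ t in Ioc l r, (Iio s).indicator d t := by
          rw [setIntegral_indicator measurableSet_Iio, hset, ← integral_Ioc_eq_integral_Ioo]
          exact mul_nonneg (hh0 s) (hD s ⟨hs.1.le, hs.2⟩)
      _ = ∫ t, F (t, s) ∂μ := by
          rw [← integral_const_mul]
          congr 1; ext t
          by_cases hts : t < s <;> simp [hF_def, hts, mul_comm]
  have hsplit : ∫ t in Ioc l r, g t * d t =
      c * (∫ t in Ioc l r, d t) + ∫ t, ∫ s, F (t, s) ∂μ ∂μ := by
    rw [← integral_const_mul c, ← integral_add (hd.const_mul c) hF.integral_prod_left]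
    refine setIntegral_congr_fun measurableSet_Ioc fun t ht => ?_
    rw [hF_left t ht]
    ring
  have hd_total : 0 ≤ ∫ t in Ioc l r, d t := by
    rcases le_or_gt l r with hlr | hlr
    · exact hD r ⟨hlr, le_rfl⟩
    · rw [Ioc_eq_empty (not_lt.2 hlr.le), Measure.restrict_empty, integral_zero_measure]
  rw [hsplit, integral_integral_swap (f := fun t s => F (t, s)) hF]
  exact add_nonneg (mul_nonneg hc hd_total) (setIntegral_nonneg measurableSet_Ioc hF_right)

lemma self_le_one_add_rpow {x p : ℝ} (hx : 0 ≤ x) (hp : 1 ≤ p) : x ≤ 1 + x ^ p := by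
  rcases le_total x 1 with h | h
  · linarith [Real.rpow_nonneg hx p]
  · linarith [Real.self_le_rpow_of_one_le h hp]

lemma integrable_of_integrable_rpow {α : Type*} [MeasurableSpace α] {μ : Measure α}
    [IsFiniteMeasure μ] {ρ : α → ℝ} {p : ℝ} (hp : 1 ≤ p) (hm : AEStronglyMeasurable ρ μ)
    (h0 : ∀ t, 0 ≤ ρ t) (h : Integrable (fun t => ρ t ^ p) μ) : Integrable ρ μ :=
  ((integrable_const 1).add h).mono' hm <| ae_of_all _ fun t => by
    rw [Real.norm_eq_abs, abs_of_nonneg (h0 t)]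
    exact self_le_one_add_rpow (h0 t) hp

lemma setIntegral_le_of_lintegral_ofReal_le {α : Type*} [MeasurableSpace α] {μ : Measure α}
    {s : Set α} {f g : α → ℝ} (hf : IntegrableOn f s μ) (hg : IntegrableOn g s μ)
    (hf0 : ∀ x, 0 ≤ f x) (hg0 : ∀ x, 0 ≤ g x)
    (h : ∫⁻ x in s, ENNReal.ofReal (f x) ∂μ ≤ ∫⁻ x in s, ENNReal.ofReal (g x) ∂μ) :
    ∫ x in s, f x ∂μ ≤ ∫ x in s, g x ∂μ := by
  rwa [← ofReal_integral_eq_lintegral_ofReal hf (ae_of_all _ hf0),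
    ← ofReal_integral_eq_lintegral_ofReal hg (ae_of_all _ hg0),
    ENNReal.ofReal_le_ofReal_iff (integral_nonneg hg0)] at h

lemma lintegral_ofReal_rpow {α : Type*} [MeasurableSpace α] {μ : Measure α} {ρ : α → ℝ} {p : ℝ}
    (hp : 0 ≤ p) (h0 : ∀ t, 0 ≤ ρ t) :
    ∫⁻ t, ENNReal.ofReal (ρ t) ^ p ∂μ = ∫⁻ t, ENNReal.ofReal (ρ t ^ p) ∂μ :=
  lintegral_congr fun t => ENNReal.ofReal_rpow_of_nonneg (h0 t) hp

lemma integral_Ioc_zpow {m M : ℝ} (hm : 0 < m) (hmM : m ≤ M) {n : ℤ} (hn : n ≠ -1) :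
    ∫ s in Ioc m M, s ^ n = (M ^ (n + 1) - m ^ (n + 1)) / (n + 1) := by
  rw [← intervalIntegral.integral_of_le hmM, integral_zpow (Or.inr ⟨hn, ?_⟩)]
  rw [uIcc_of_le hmM]
  exact fun h => hm.not_ge h.1

lemma integral_Ioc_div_sq (c : ℝ) {m M : ℝ} (hm : 0 < m) (hmM : m ≤ M) :
    ∫ s in Ioc m M, c / s ^ 2 = c / m - c / M := by
  simp_rw [div_eq_mul_inv c, ← zpow_natCast, ← zpow_neg]
  rw [integral_const_mul, integral_Ioc_zpow hm hmM (by norm_num)]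
  norm_num
  ring

lemma integral_Ioc_div_cube (c : ℝ) {m M : ℝ} (hm : 0 < m) (hmM : m ≤ M) :
    ∫ s in Ioc m M, c / s ^ 3 = c / (2 * m ^ 2) - c / (2 * M ^ 2) := by
  simp_rw [div_eq_mul_inv c, ← zpow_natCast, ← zpow_neg]
  rw [integral_const_mul, integral_Ioc_zpow hm hmM (by norm_num)]
  norm_num
  ring

noncomputable def lam (a t : ℝ) : ℝ := (1/a + 1/(1-a)) ^ 2 * min (1/4) (a ^ 2 / t ^ 2)

noncomputable def profile (a t : ℝ) : ℝ := min (1/2) (a / t)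

noncomputable def profileDensity (a : ℝ) : ℝ → ℝ := (Ioc (2 * a) 1).indicator fun s => a / s ^ 2

section Profile

variable {a t : ℝ}

lemma profile_nonneg (ha : 0 ≤ a) (ht : 0 ≤ t) : 0 ≤ profile a t :=
  le_min (by norm_num) (div_nonneg ha ht)

lemma profile_le_half : profile a t ≤ 1/2 := min_le_left _ _

lemma measurable_profile : Measurable (profile a) := by
  unfold profile; fun_prop

lemma profile_eq_div_max (ha : 0 < a) (ht : 0 < t) : profile a t = a / max (2 * a) t := by
  rcases le_total (2 * a) t with h | h
  · rw [max_eq_right h, profile, min_eq_right ((div_le_iff₀ ht).2 (by linarith))]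
  · rw [max_eq_left h, profile, min_eq_left ((le_div_iff₀ ht).2 (by linarith))]
    field_simp

lemma lam_eq_sq (ha : 0 ≤ a) (ht : 0 ≤ t) : lam a t = ((1/a + 1/(1-a)) * profile a t) ^ 2 := by
  have hmin : min (1/4 : ℝ) (a ^ 2 / t ^ 2) = profile a t ^ 2 := by
    rw [profile, ← div_pow, show (1/4 : ℝ) = (1/2) ^ 2 by norm_num]
    rcases le_total (1/2 : ℝ) (a / t) with h | h
    · rw [min_eq_left h, min_eq_left (pow_le_pow_left₀ (by norm_num) h 2)]
    · rw [min_eq_right h, min_eq_right (pow_le_pow_left₀ (div_nonneg ha ht) h 2)]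
  rw [lam, hmin, mul_pow]

lemma lam_nonneg : 0 ≤ lam a t := by
  unfold lam; positivity

lemma lam_le : lam a t ≤ (1/a + 1/(1-a)) ^ 2 / 4 := by
  have := mul_le_mul_of_nonneg_left (min_le_left (1/4 : ℝ) (a ^ 2 / t ^ 2))
    (sq_nonneg (1/a + 1/(1-a)))
  rw [lam]
  linarith

lemma measurable_lam : Measurable (lam a) := by
  unfold lam; fun_prop

variable (ha : 0 < a) (ha1 : a < 1)
include ha ha1

lemma one_div_add_one_div_one_sub_pos : 0 < 1/a + 1/(1-a) := by
  have : 0 < 1 - a := by linarith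
  positivity

lemma sqrt_lam (ht : 0 ≤ t) : √(lam a t) = (1/a + 1/(1-a)) * profile a t := by
  rw [lam_eq_sq ha.le ht, Real.sqrt_sq]
  exact mul_nonneg (one_div_add_one_div_one_sub_pos ha ha1).le (profile_nonneg ha.le ht)

lemma lam_rpow_three_halves (ht : 0 ≤ t) :
    lam a t ^ ((3:ℝ)/2) = ((1/a + 1/(1-a)) * profile a t) ^ 3 := by
  rw [rpow_three_halves_eq_sqrt_pow lam_nonneg, sqrt_lam ha ha1 ht]

end Profile

lemma profileDensity_nonneg {a : ℝ} (ha : 0 ≤ a) (s : ℝ) : 0 ≤ profileDensity a s :=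
  indicator_nonneg (fun s _ => by positivity) s

lemma integrable_profileDensity {a : ℝ} (ha : 0 < a) : Integrable (profileDensity a) := by
  have hcont : ContinuousOn (fun s : ℝ => a / s ^ 2) (Icc (2 * a) 1) :=
    continuousOn_const.div (continuous_pow 2).continuousOn fun s hs =>
      pow_ne_zero 2 (by linarith [hs.1])
  exact (hcont.integrableOn_Icc.mono_set Ioc_subset_Icc_self).integrable_indicator
    measurableSet_Ioc

section Value

variable {a : ℝ} (ha : 0 < a) (ha' : a ≤ 1/2)
include ha ha'

lemma profile_eq_add_integral {t : ℝ} (ht : t ∈ Ioc 0 1) :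
    profile a t = a + ∫ s in Ioc t 1, profileDensity a s := by
  have hm : 0 < max (2 * a) t := lt_max_of_lt_right ht.1
  rw [profileDensity, setIntegral_indicator measurableSet_Ioc, Ioc_inter_Ioc, inf_idem,
    sup_comm, integral_Ioc_div_sq a hm (max_le (by linarith) ht.2), profile_eq_div_max ha ht.1]
  ring

lemma integral_profile_pow_three : ∫ t in Ioc 0 1, profile a t ^ 3 = a * (3 - 4 * a ^ 2) / 8 := by
  have h2a : 0 < 2 * a := by linarith
  have hsplit : Ioc (0:ℝ) 1 = Ioc 0 (2 * a) ∪ Ioc (2 * a) 1 :=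
    (Ioc_union_Ioc_eq_Ioc h2a.le (by linarith)).symm
  have hint : IntegrableOn (fun t => profile a t ^ 3) (Ioc 0 1) :=
    Measure.integrableOn_of_bounded measure_Ioc_lt_top.ne
      (measurable_profile.pow_const 3).aestronglyMeasurable (M := (1/2) ^ 3) <| by
        filter_upwards [ae_restrict_mem measurableSet_Ioc] with t ht
        rw [Real.norm_eq_abs, abs_pow, abs_of_nonneg (profile_nonneg ha.le ht.1.le)]
        exact pow_le_pow_left₀ (profile_nonneg ha.le ht.1.le) profile_le_half 3
  rw [hsplit] at hint ⊢
  rw [setIntegral_union (Ioc_disjoint_Ioc_of_le le_rfl) measurableSet_Ioc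
    (hint.mono_set subset_union_left) (hint.mono_set subset_union_right)]
  have hleft : ∫ t in Ioc 0 (2 * a), profile a t ^ 3 = ∫ t in Ioc 0 (2 * a), (1/2 : ℝ) ^ 3 := by
    refine setIntegral_congr_fun measurableSet_Ioc fun t ht => ?_
    rw [profile_eq_div_max ha ht.1, max_eq_left ht.2]
    field_simp
  have hright : ∫ t in Ioc (2 * a) 1, profile a t ^ 3 = ∫ t in Ioc (2 * a) 1, a ^ 3 / t ^ 3 := by
    refine setIntegral_congr_fun measurableSet_Ioc fun t ht => ?_
    rw [profile_eq_div_max ha (h2a.trans ht.1), max_eq_right ht.1.le, div_pow]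
  rw [hleft, hright, setIntegral_const, integral_Ioc_div_cube _ h2a (by linarith),
    Real.volume_real_Ioc_of_le h2a.le, smul_eq_mul]
  field_simp
  ring

lemma integral_lam_rpow_three_halves :
    ∫ t in Ioc 0 1, lam a t ^ ((3:ℝ)/2) = (3 - 4 * a ^ 2) / (8 * (1 - a) ^ 3 * a ^ 2) := by
  have ha1 : 0 < 1 - a := by linarith
  rw [setIntegral_congr_fun measurableSet_Ioc
      fun t ht => lam_rpow_three_halves ha (by linarith) ht.1.le]
  simp_rw [mul_pow]
  rw [integral_const_mul, integral_profile_pow_three ha ha']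
  field_simp
  ring

end Value

section Integrability

variable {μ : Measure ℝ} (a : ℝ)

lemma integrable_lam [IsFiniteMeasure μ] : Integrable (lam a) μ :=
  .of_bound measurable_lam.aestronglyMeasurable _ <| ae_of_all _ fun t => by
    rw [Real.norm_eq_abs, abs_of_nonneg lam_nonneg]
    exact lam_le

lemma integrable_lam_rpow [IsFiniteMeasure μ] : Integrable (fun t => lam a t ^ ((3:ℝ)/2)) μ :=
  .of_bound (measurable_lam.pow_const _).aestronglyMeasurable _ <| ae_of_all _ fun t => by
    rw [Real.norm_eq_abs, abs_of_nonneg (Real.rpow_nonneg lam_nonneg _)]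
    exact Real.rpow_le_rpow lam_nonneg lam_le (by norm_num)

lemma integrable_sqrt_lam_mul {d : ℝ → ℝ} (hd : Integrable d μ) :
    Integrable (fun t => √(lam a t) * d t) μ :=
  hd.bdd_mul (measurable_lam.sqrt).aestronglyMeasurable <| ae_of_all _ fun t => by
    rw [Real.norm_eq_abs, abs_of_nonneg (Real.sqrt_nonneg _)]
    exact Real.sqrt_le_sqrt lam_le

end Integrability

section Minimality

variable {a : ℝ} (ha : 0 < a) (ha' : a ≤ 1/2)
include ha ha'

lemma integral_sqrt_lam_mul_nonneg {d : ℝ → ℝ} (hd : IntegrableOn d (Ioc 0 1))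
    (hD : ∀ t ∈ Icc (0:ℝ) 1, 0 ≤ ∫ s in Ioc 0 t, d s) :
    0 ≤ ∫ t in Ioc 0 1, √(lam a t) * d t := by
  have hcoeff := one_div_add_one_div_one_sub_pos ha (by linarith)
  rw [setIntegral_congr_fun measurableSet_Ioc fun t ht => by
      rw [sqrt_lam ha (by linarith) ht.1.le, mul_assoc], integral_const_mul]
  exact mul_nonneg hcoeff.le <| setIntegral_mul_nonneg_of_eq_add_tail ha.le
    (profileDensity_nonneg ha.le) (integrable_profileDensity ha).integrableOn hd
    (fun t ht => profile_eq_add_integral ha ha' ht) hD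

lemma integral_lam_rpow_le_and_ae_eq {ρ : ℝ → ℝ} (hm : Measurable ρ) (h0 : ∀ t, 0 ≤ ρ t)
    (hρ : IntegrableOn (fun t => ρ t ^ ((3:ℝ)/2)) (Ioc 0 1))
    (hcons : ∀ t ∈ Icc (0:ℝ) 1,
      ∫⁻ s in Ioc 0 t, ENNReal.ofReal (lam a s) ≤ ∫⁻ s in Ioc 0 t, ENNReal.ofReal (ρ s)) :
    ∫ t in Ioc 0 1, lam a t ^ ((3:ℝ)/2) ≤ ∫ t in Ioc 0 1, ρ t ^ ((3:ℝ)/2) ∧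
      (∫ t in Ioc 0 1, ρ t ^ ((3:ℝ)/2) = ∫ t in Ioc 0 1, lam a t ^ ((3:ℝ)/2) →
        ρ =ᵐ[volume.restrict (Ioc 0 1)] lam a) := by
  have hρ1 : IntegrableOn ρ (Ioc 0 1) :=
    integrable_of_integrable_rpow (by norm_num) hm.aestronglyMeasurable h0 hρ
  have hD : ∀ t ∈ Icc (0:ℝ) 1, 0 ≤ ∫ s in Ioc 0 t, ρ s - lam a s := by
    intro t ht
    have hρt : IntegrableOn ρ (Ioc 0 t) := hρ1.mono_set (Ioc_subset_Ioc_right ht.2)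
    rw [integral_sub hρt (integrable_lam a), sub_nonneg]
    exact setIntegral_le_of_lintegral_ofReal_le (integrable_lam a) hρt (fun _ => lam_nonneg) h0
      (hcons t ht)
  have hd : IntegrableOn (fun t => ρ t - lam a t) (Ioc 0 1) := hρ1.sub (integrable_lam a)
  have hpair := integral_sqrt_lam_mul_nonneg ha ha' hd hD
  have hprod := integrable_sqrt_lam_mul a hd
  exact ⟨integral_rpow_three_halves_le h0 (fun _ => lam_nonneg) hρ (integrable_lam_rpow a)
      hprod hpair,
    ae_eq_of_integral_rpow_three_halves_eq h0 (fun _ => lam_nonneg) hρ (integrable_lam_rpow a)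
      hprod hpair⟩

end Minimality

noncomputable def energy (ρ : ℝ → ℝ) : ENNReal :=
  (4/3 : ENNReal) * ∫⁻ t in Ioc (0:ℝ) 1, ENNReal.ofReal (ρ t) ^ ((3:ℝ)/2)

section Energy

variable {ρ : ℝ → ℝ}

lemma energy_eq_ofReal (h0 : ∀ t, 0 ≤ ρ t)
    (hρ : IntegrableOn (fun t => ρ t ^ ((3:ℝ)/2)) (Ioc 0 1)) :
    energy ρ = ENNReal.ofReal (4/3 * ∫ t in Ioc 0 1, ρ t ^ ((3:ℝ)/2)) := by
  rw [energy, lintegral_ofReal_rpow (by norm_num) h0, ← ofReal_integral_eq_lintegral_ofReal hρ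
    (ae_of_all _ fun t => Real.rpow_nonneg (h0 t) _), ENNReal.ofReal_mul (by norm_num),
    ENNReal.ofReal_div_of_pos (by norm_num)]
  norm_num

lemma integrableOn_rpow_of_energy_ne_top (hm : Measurable ρ) (h0 : ∀ t, 0 ≤ ρ t)
    (h : energy ρ ≠ ⊤) : IntegrableOn (fun t => ρ t ^ ((3:ℝ)/2)) (Ioc 0 1) := by
  refine ⟨(hm.pow_const _).aestronglyMeasurable, ?_⟩
  rw [hasFiniteIntegral_iff_ofReal (ae_of_all _ fun t => Real.rpow_nonneg (h0 t) _),
    ← lintegral_ofReal_rpow (by norm_num) h0]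
  exact lt_top_iff_ne_top.2 fun htop => h (by rw [energy, htop, ENNReal.mul_top (by norm_num)])

variable {a : ℝ} (ha : 0 < a) (ha' : a ≤ 1/2)
include ha ha'

lemma energy_lam : energy (lam a) = ENNReal.ofReal ((3 - 4*a^2) / (6*(1-a)^3*a^2)) := by
  have ha1 : 0 < 1 - a := by linarith
  rw [energy_eq_ofReal (fun _ => lam_nonneg) (integrable_lam_rpow a),
    integral_lam_rpow_three_halves ha ha']
  congr 1
  field_simp
  ring

lemma energy_lam_le (hm : Measurable ρ) (h0 : ∀ t, 0 ≤ ρ t)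
    (hcons : ∀ t ∈ Icc (0:ℝ) 1,
      ∫⁻ s in Ioc 0 t, ENNReal.ofReal (lam a s) ≤ ∫⁻ s in Ioc 0 t, ENNReal.ofReal (ρ s)) :
    energy (lam a) ≤ energy ρ := by
  by_cases htop : energy ρ = ⊤
  · exact htop ▸ le_top
  have hρ := integrableOn_rpow_of_energy_ne_top hm h0 htop
  rw [energy_eq_ofReal (fun _ => lam_nonneg) (integrable_lam_rpow a), energy_eq_ofReal h0 hρ]
  exact ENNReal.ofReal_le_ofReal <| mul_le_mul_of_nonneg_left
    (integral_lam_rpow_le_and_ae_eq ha ha' hm h0 hρ hcons).1 (by norm_num)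

lemma ae_eq_lam_of_energy_eq (hm : Measurable ρ) (h0 : ∀ t, 0 ≤ ρ t)
    (hcons : ∀ t ∈ Icc (0:ℝ) 1,
      ∫⁻ s in Ioc 0 t, ENNReal.ofReal (lam a s) ≤ ∫⁻ s in Ioc 0 t, ENNReal.ofReal (ρ s))
    (heq : energy ρ = energy (lam a)) :
    ρ =ᵐ[volume.restrict (Ioc 0 1)] lam a := by
  have hρ := integrableOn_rpow_of_energy_ne_top hm h0
    (heq ▸ energy_lam ha ha' ▸ ENNReal.ofReal_ne_top)
  refine (integral_lam_rpow_le_and_ae_eq ha ha' hm h0 hρ hcons).2 ?_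
  rw [energy_eq_ofReal (fun _ => lam_nonneg) (integrable_lam_rpow a), energy_eq_ofReal h0 hρ,
    ENNReal.ofReal_eq_ofReal_iff
      (mul_nonneg (by norm_num) (integral_nonneg fun t => Real.rpow_nonneg (h0 t) _))
      (mul_nonneg (by norm_num) (integral_nonneg fun t => Real.rpow_nonneg lam_nonneg _))] at heq
  linarith

end Energy

end GeodesicTwoPiece

/-- For `a ∈ (0,1/2]`, the function `λ(t) = b·min(1/4, a²/t²)` with
`b = (1/a + 1/(1-a))²` is the unique minimizer of `(4/3)∫_0^1 ρ^{3/2}` over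
nonnegative measurable `ρ` with `∫_0^t ρ ≥ ∫_0^t λ` for all `t ∈ [0,1]`, and
the minimal value is `(3-4a²)/(6(1-a)³a²)`. -/
theorem geodesic_twopiece_optimizer (a : ℝ) (ha : 0 < a) (ha' : a ≤ 1/2) :
    let lam : ℝ → ℝ := fun t => (1/a + 1/(1-a))^2 * min (1/4) (a^2 / t^2)
    -- minimal value
    ((4/3 : ENNReal) * ∫⁻ t in Set.Ioc (0:ℝ) 1, ENNReal.ofReal (lam t) ^ ((3:ℝ)/2)
        = ENNReal.ofReal ((3 - 4*a^2) / (6*(1-a)^3*a^2))) ∧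
    -- minimality
    (∀ ρ : ℝ → ℝ, Measurable ρ → (∀ t, 0 ≤ ρ t) →
      (∀ t ∈ Set.Icc (0:ℝ) 1,
        ∫⁻ s in Set.Ioc (0:ℝ) t, ENNReal.ofReal (lam s) ≤
          ∫⁻ s in Set.Ioc (0:ℝ) t, ENNReal.ofReal (ρ s)) →
      (4/3 : ENNReal) * ∫⁻ t in Set.Ioc (0:ℝ) 1, ENNReal.ofReal (lam t) ^ ((3:ℝ)/2) ≤
        (4/3 : ENNReal) * ∫⁻ t in Set.Ioc (0:ℝ) 1, ENNReal.ofReal (ρ t) ^ ((3:ℝ)/2)) ∧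
    -- uniqueness
    (∀ ρ : ℝ → ℝ, Measurable ρ → (∀ t, 0 ≤ ρ t) →
      (∀ t ∈ Set.Icc (0:ℝ) 1,
        ∫⁻ s in Set.Ioc (0:ℝ) t, ENNReal.ofReal (lam s) ≤
          ∫⁻ s in Set.Ioc (0:ℝ) t, ENNReal.ofReal (ρ s)) →
      ((4/3 : ENNReal) * ∫⁻ t in Set.Ioc (0:ℝ) 1, ENNReal.ofReal (ρ t) ^ ((3:ℝ)/2)
        = (4/3 : ENNReal) * ∫⁻ t in Set.Ioc (0:ℝ) 1, ENNReal.ofReal (lam t) ^ ((3:ℝ)/2)) →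
      (∀ᵐ t ∂(volume.restrict (Set.Ioc (0:ℝ) 1)), ρ t = lam t)) :=
  ⟨GeodesicTwoPiece.energy_lam ha ha',
    fun _ hm h0 hcons => GeodesicTwoPiece.energy_lam_le ha ha' hm h0 hcons,
    fun _ hm h0 hcons heq => GeodesicTwoPiece.ae_eq_lam_of_energy_eq ha ha' hm h0 hcons heq⟩
end

section
/- Let f:[0,1] → ℝ be absolutely continuous with f(0) = f(1) = 0 and sup_{t∈[0,1]} |f(t)| ≥ a for some a > 0. Then ∫_0^1 |f'(t)|² dt ≥ 4a². -/
open MeasureTheory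

/-! By the fundamental theorem of calculus, `f` travels from `0` up to `|f t₀| ≥ a` and back,
so `∫₀¹ |f'| ≥ 2a`; Cauchy–Schwarz on the unit interval gives `(∫₀¹ |f'|)² ≤ ∫₀¹ |f'|²`. -/

theorem abs_sub_add_abs_sub_le_integral_abs {f f' : ℝ → ℝ} {s t u : ℝ} (hst : s ≤ t) (htu : t ≤ u)
    (hf'st : IntervalIntegrable f' volume s t) (hf'tu : IntervalIntegrable f' volume t u)
    (hfst : f t - f s = ∫ v in s..t, f' v) (hftu : f u - f t = ∫ v in t..u, f' v) :
    |f t - f s| + |f u - f t| ≤ ∫ v in s..u, |f' v| := by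
  rw [← intervalIntegral.integral_add_adjacent_intervals hf'st.abs hf'tu.abs, hfst, hftu]
  exact add_le_add (intervalIntegral.abs_integral_le_integral_abs hst)
    (intervalIntegral.abs_integral_le_integral_abs htu)

theorem sq_lintegral_le_measure_univ_mul_lintegral_sq {α : Type*} [MeasurableSpace α]
    (μ : Measure α) {g : α → ENNReal} (hg : AEMeasurable g μ) :
    (∫⁻ x, g x ∂μ) ^ 2 ≤ μ Set.univ * ∫⁻ x, g x ^ 2 ∂μ := by
  have holder := ENNReal.lintegral_mul_le_Lp_mul_Lq μ Real.HolderConjugate.two_two hg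
    aemeasurable_const (g := 1)
  simp only [Pi.mul_apply, Pi.one_apply, mul_one, lintegral_const, one_pow, one_mul,
    ENNReal.rpow_two] at holder
  calc (∫⁻ x, g x ∂μ) ^ 2
      ≤ ((∫⁻ x, g x ^ 2 ∂μ) ^ (1 / 2 : ℝ) * μ Set.univ ^ (1 / 2 : ℝ)) ^ 2 := by gcongr
    _ = μ Set.univ * ∫⁻ x, g x ^ 2 ∂μ := by
      rw [mul_pow, ← ENNReal.rpow_two, ← ENNReal.rpow_two, ← ENNReal.rpow_mul, ← ENNReal.rpow_mul]
      norm_num [mul_comm]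

/-- If `f : [0,1] → ℝ` is absolutely continuous (given here via an integrable
derivative `f'` and the fundamental theorem of calculus) with `f(0) = f(1) = 0`
and `sup |f| ≥ a`, then `∫_0^1 |f'|² ≥ 4a²`. -/
theorem dirichlet_energy_of_excursion (f f' : ℝ → ℝ) (a : ℝ) (ha : 0 < a)
    (hint : IntegrableOn f' (Set.Icc (0:ℝ) 1))
    (hftc : ∀ s t : ℝ, 0 ≤ s → s ≤ t → t ≤ 1 → f t - f s = ∫ u in s..t, f' u)
    (hf0 : f 0 = 0) (hf1 : f 1 = 0)
    (hsup : ∃ t₀ ∈ Set.Icc (0:ℝ) 1, a ≤ |f t₀|) :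
    ENNReal.ofReal (4 * a^2) ≤ ∫⁻ t in Set.Ioc (0:ℝ) 1, ENNReal.ofReal ((f' t)^2) := by
  obtain ⟨t₀, ⟨ht₀, ht₁⟩, hat₀⟩ := hsup
  have hf'_int {s t : ℝ} (hs : 0 ≤ s) (hst : s ≤ t) (ht : t ≤ 1) :
      IntervalIntegrable f' volume s t :=
    (intervalIntegrable_iff_integrableOn_Icc_of_le hst).mpr
      (hint.mono_set (Set.Icc_subset_Icc hs ht))
  have h_integral : 2 * a ≤ ∫ t in Set.Ioc (0:ℝ) 1, |f' t| := by
    have := abs_sub_add_abs_sub_le_integral_abs ht₀ ht₁ (hf'_int le_rfl ht₀ ht₁)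
      (hf'_int ht₀ ht₁ le_rfl) (hftc _ _ le_rfl ht₀ ht₁) (hftc _ _ ht₀ ht₁ le_rfl)
    rw [hf0, hf1, sub_zero, zero_sub, abs_neg, intervalIntegral.integral_of_le zero_le_one]
      at this
    linarith
  have h_lintegral :
      ENNReal.ofReal (2 * a) ≤ ∫⁻ t in Set.Ioc (0:ℝ) 1, ENNReal.ofReal |f' t| := by
    rw [← ofReal_integral_eq_lintegral_ofReal (hint.mono_set Set.Ioc_subset_Icc_self).abs
      (.of_forall fun _ => abs_nonneg _)]
    exact ENNReal.ofReal_le_ofReal h_integral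
  calc ENNReal.ofReal (4 * a ^ 2) = ENNReal.ofReal (2 * a) ^ 2 := by
        rw [← ENNReal.ofReal_pow (by positivity)]; ring_nf
    _ ≤ (∫⁻ t in Set.Ioc (0:ℝ) 1, ENNReal.ofReal |f' t|) ^ 2 := by gcongr
    _ ≤ volume (Set.Ioc (0:ℝ) 1) * ∫⁻ t in Set.Ioc (0:ℝ) 1, ENNReal.ofReal |f' t| ^ 2 := by
        simpa using sq_lintegral_le_measure_univ_mul_lintegral_sq _
          (hint.mono_set Set.Ioc_subset_Icc_self).aemeasurable.abs.ennreal_ofReal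
    _ = ∫⁻ t in Set.Ioc (0:ℝ) 1, ENNReal.ofReal ((f' t)^2) := by
        simp [← ENNReal.ofReal_pow (abs_nonneg _)]
end

section
/- Fix β ∈ [1/8, 1/2) and let f:[0,1] → ℝ be the continuous piecewise linear function with f(0) = f(1) = 0, f(β) = f(1-β) = 1, linear on [0,β], [β, 1-β], and [1-β, 1]. View f' as a random variable on [0,1] with Lebesgue measure. Then for all 0 ≤ s < t ≤ 1, the conditional variance of f' given the interval [s,t] is at most the unconditional variance: Var[f' | [s,t]] ≤ Var(f') = 2/β. -/
/-!
Write `A = |[s,t] ∩ (-∞,β)|` and `B = |[s,t] ∩ (1-β,∞)|`. Since `f' = (𝟙_{(-∞,β)} - 𝟙_{(1-β,∞)}) / β`,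
the conditional variance equals `((A + B)(t - s) - (A - B)²) / (β (t - s))²`. If `[s,t]` misses one
of the two slopes, `f'` takes only two values there, one of them `0`, and the variance is at most
`1 / (4β²) ≤ 2/β` as `β ≥ 1/8`. Otherwise `[s,t]` contains the flat piece of length `1 - 2β`, and
`A + B ≤ 2β` gives `A + B ≤ 2β (t - s)`: already the conditional second moment is at most `2/β`.
-/

open MeasureTheory Set

/-- The conditional variance of `g` on the interval `[s,t]` (with respect to
normalized Lebesgue measure). -/
noncomputable def condVar (g : ℝ → ℝ) (s t : ℝ) : ℝ :=
  (∫ u in s..t, (g u)^2) / (t - s) - ((∫ u in s..t, g u) / (t - s))^2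

lemma intervalIntegrable_indicator_Ioi_one (c s t : ℝ) :
    IntervalIntegrable ((Ioi c).indicator (1 : ℝ → ℝ)) volume s t := by
  rw [intervalIntegrable_iff]
  exact (integrableOn_const (by simp)).indicator measurableSet_Ioi

lemma intervalIntegrable_indicator_Iio_one (c s t : ℝ) :
    IntervalIntegrable ((Iio c).indicator (1 : ℝ → ℝ)) volume s t := by
  rw [intervalIntegrable_iff]
  exact (integrableOn_const (by simp)).indicator measurableSet_Iio

lemma integral_indicator_Ioi_one (c : ℝ) {s t : ℝ} (h : s ≤ t) :
    ∫ u in s..t, (Ioi c).indicator 1 u = max t c - max s c := by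
  rw [intervalIntegral.integral_of_le h, integral_indicator_one measurableSet_Ioi,
    measureReal_restrict_apply measurableSet_Ioi, inter_comm, Ioc_inter_Ioi,
    Real.volume_real_Ioc]
  rcases le_total t c with htc | hct
  · simp [htc, h.trans htc]
  · simp [hct, h]

lemma integral_indicator_Iio_one (c : ℝ) {s t : ℝ} (h : s ≤ t) :
    ∫ u in s..t, (Iio c).indicator 1 u = min t c - min s c := by
  have hreflect : (Iio c).indicator (1 : ℝ → ℝ) = fun u => (Ioi (-c)).indicator 1 (-u) := by
    ext u
    simp [indicator_apply]
  rw [hreflect, intervalIntegral.integral_comp_neg, integral_indicator_Ioi_one _ (neg_le_neg h),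
    max_neg_neg, max_neg_neg]
  ring

-- `(A + B) L - (A - B)²` is `L²` times the variance of a variable equal to `1` and `-1` on sets
-- of measure `A` and `B` in a space of measure `L`.
lemma scaled_variance_le {A B L β : ℝ} (hβ : 1/8 ≤ β) (hL : 0 ≤ L)
    (h : A = 0 ∨ B = 0 ∨ A + B ≤ 2 * β * L) :
    (A + B) * L - (A - B) ^ 2 ≤ 2 * β * L ^ 2 := by
  rcases h with rfl | rfl | h
  · nlinarith [sq_nonneg (L - 2 * B)]
  · nlinarith [sq_nonneg (L - 2 * A)]
  · nlinarith [sq_nonneg (A - B), mul_le_mul_of_nonneg_right h hL]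

noncomputable def trapezoidDeriv (β u : ℝ) : ℝ :=
  if u < β then 1/β else if u ≤ 1 - β then 0 else -(1/β)

section trapezoidDeriv

variable {β : ℝ}

lemma trapezoidDeriv_eq (hβ : β ≤ 1/2) (u : ℝ) :
    trapezoidDeriv β u = ((Iio β).indicator 1 u - (Ioi (1 - β)).indicator 1 u) / β := by
  unfold trapezoidDeriv
  by_cases h₁ : u < β
  · simp [h₁, show ¬ 1 - β < u by linarith]
  rcases le_or_gt u (1 - β) with h₂ | h₂
  · simp [h₁, h₂, h₂.not_gt]
  · simp [h₁, h₂, h₂.not_ge, neg_div]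

lemma trapezoidDeriv_sq (hβ : β ≤ 1/2) (u : ℝ) :
    trapezoidDeriv β u ^ 2 = ((Iio β).indicator 1 u + (Ioi (1 - β)).indicator 1 u) / β ^ 2 := by
  unfold trapezoidDeriv
  by_cases h₁ : u < β
  · simp [h₁, show ¬ 1 - β < u by linarith]
  rcases le_or_gt u (1 - β) with h₂ | h₂
  · simp [h₁, h₂, h₂.not_gt]
  · simp [h₁, h₂, h₂.not_ge]

lemma integral_trapezoidDeriv (hβ : β ≤ 1/2) {s t : ℝ} (h : s ≤ t) :
    ∫ u in s..t, trapezoidDeriv β u =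
      ((min t β - min s β) - (max t (1 - β) - max s (1 - β))) / β := by
  simp_rw [trapezoidDeriv_eq hβ]
  rw [intervalIntegral.integral_div, intervalIntegral.integral_sub
    (intervalIntegrable_indicator_Iio_one _ _ _) (intervalIntegrable_indicator_Ioi_one _ _ _),
    integral_indicator_Iio_one _ h, integral_indicator_Ioi_one _ h]

lemma integral_trapezoidDeriv_sq (hβ : β ≤ 1/2) {s t : ℝ} (h : s ≤ t) :
    ∫ u in s..t, trapezoidDeriv β u ^ 2 =
      ((min t β - min s β) + (max t (1 - β) - max s (1 - β))) / β ^ 2 := by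
  simp_rw [trapezoidDeriv_sq hβ]
  rw [intervalIntegral.integral_div, intervalIntegral.integral_add
    (intervalIntegrable_indicator_Iio_one _ _ _) (intervalIntegrable_indicator_Ioi_one _ _ _),
    integral_indicator_Iio_one _ h, integral_indicator_Ioi_one _ h]

lemma condVar_trapezoidDeriv (hβ₀ : β ≠ 0) (hβ : β ≤ 1/2) {s t : ℝ} (h : s < t) :
    condVar (trapezoidDeriv β) s t =
      (((min t β - min s β) + (max t (1 - β) - max s (1 - β))) * (t - s)
        - ((min t β - min s β) - (max t (1 - β) - max s (1 - β))) ^ 2) / (β ^ 2 * (t - s) ^ 2) := by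
  have hts : t - s ≠ 0 := sub_ne_zero.2 h.ne'
  rw [condVar, integral_trapezoidDeriv hβ h.le, integral_trapezoidDeriv_sq hβ h.le]
  field_simp

lemma trapezoid_masses_cases (hβ : β ≤ 1/2) {s t : ℝ} (hs : 0 ≤ s) (hst : s ≤ t) (ht : t ≤ 1) :
    min t β - min s β = 0 ∨ max t (1 - β) - max s (1 - β) = 0 ∨
      (min t β - min s β) + (max t (1 - β) - max s (1 - β)) ≤ 2 * β * (t - s) := by
  by_cases hsβ : s < β
  swap
  · left
    rw [min_eq_right (not_lt.1 hsβ), min_eq_right (by linarith)]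
    ring
  by_cases htβ : 1 - β < t
  swap
  · right; left
    rw [max_eq_right (not_lt.1 htβ), max_eq_right (by linarith)]
    ring
  right; right
  rw [min_eq_right (by linarith), min_eq_left hsβ.le, max_eq_left htβ.le, max_eq_right (by linarith)]
  nlinarith

lemma condVar_trapezoidDeriv_le (hβ₁ : 1/8 ≤ β) (hβ₂ : β ≤ 1/2) {s t : ℝ} (hs : 0 ≤ s)
    (hst : s < t) (ht : t ≤ 1) : condVar (trapezoidDeriv β) s t ≤ 2 / β := by
  have hβ : 0 < β := by linarith
  have hL : 0 < t - s := sub_pos.2 hst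
  rw [condVar_trapezoidDeriv hβ.ne' hβ₂ hst, div_le_div_iff₀ (by positivity) hβ]
  have key := scaled_variance_le hβ₁ hL.le (trapezoid_masses_cases hβ₂ hs hst.le ht)
  linarith [mul_le_mul_of_nonneg_right key hβ.le]

lemma condVar_trapezoidDeriv_zero_one (hβ₀ : 0 < β) (hβ : β ≤ 1/2) :
    condVar (trapezoidDeriv β) 0 1 = 2 / β := by
  rw [condVar_trapezoidDeriv hβ₀.ne' hβ zero_lt_one, min_eq_right (by linarith),
    min_eq_left hβ₀.le, max_eq_left (by linarith), max_eq_right (by linarith)]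
  field_simp
  ring

end trapezoidDeriv

/-- For `β ∈ [1/8, 1/2)` and the derivative `g = f'` of the trapezoid function
with `f(0)=f(1)=0`, `f(β)=f(1-β)=1`, the conditional variance of `f'` on any
subinterval `[s,t] ⊆ [0,1]` is at most the unconditional variance `2/β`. -/
theorem trapezoid_conditional_variance (β : ℝ) (hβ1 : 1/8 ≤ β) (hβ2 : β < 1/2) :
    let g : ℝ → ℝ := fun u => if u < β then 1/β else if u ≤ 1 - β then 0 else -(1/β)
    (∀ s t : ℝ, 0 ≤ s → s < t → t ≤ 1 → condVar g s t ≤ 2/β) ∧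
    condVar g 0 1 = 2/β :=
  ⟨fun _ _ hs hst ht => condVar_trapezoidDeriv_le hβ1 hβ2.le hs hst ht,
    condVar_trapezoidDeriv_zero_one (by linarith) hβ2.le⟩
end

section
/- Let e be a function on pairs of space-time points (p;q) with increasing time coordinates, satisfying e ≥ d (where d(x,s;y,t) = -(y-x)²/(t-s)), the reverse triangle inequality, the metric composition law e(x,s;y,t) = max_{z∈ℝ}(e(x,s;z,r) + e(z,r;y,t)) for all s < r < t, and the bound e(u) - d(u) ≤ m^{2/3}(t-s)^{1/3}. Suppose for every pair (p;q) and r in the time interval, the map z ↦ e(p;z,r) + e(z,r;q) has a rightmost maximizer z_u(r), and suppose r ↦ z_u(r) is continuous. Then for points (p,q) = (x,s;y,t) and (p',q') = (x',s;y',t) with x < x' and y < y', the quadrangle inequality holds: e(p;q') + e(p';q) ≤ e(p;q) + e(p';q'). -/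
/-- The Dirichlet metric `d(x,s;y,t) = -(y-x)^2/(t-s)`. -/
noncomputable def dirich (x s y t : ℝ) : ℝ := -(y - x)^2 / (t - s)

/-- Quadrangle inequality for Dirichlet-dominant directed metrics satisfying the
metric composition law, with continuous rightmost maximizers `Z x s y t : ℝ → ℝ`
interpolating between the endpoints. -/
theorem quadrangle_inequality
    (e : ℝ → ℝ → ℝ → ℝ → ℝ) (m : ℝ) (hm : 0 < m)
    (hdom : ∀ x s y t : ℝ, s < t → dirich x s y t ≤ e x s y t)
    (htri : ∀ x s y r z t : ℝ, s < r → r < t →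
      e x s y r + e y r z t ≤ e x s z t)
    (hcomp : ∀ x s y t r : ℝ, s < r → r < t →
      ∃ z : ℝ, e x s y t = e x s z r + e z r y t)
    (hclose : ∀ x s y t : ℝ, s < t →
      e x s y t - dirich x s y t ≤ m ^ ((2:ℝ)/3) * (t - s) ^ ((1:ℝ)/3))
    (Z : ℝ → ℝ → ℝ → ℝ → ℝ → ℝ)
    (hZmax : ∀ x s y t r : ℝ, s < r → r < t → ∀ z : ℝ,
      e x s z r + e z r y t ≤
        e x s (Z x s y t r) r + e (Z x s y t r) r y t)
    (hZright : ∀ x s y t r : ℝ, s < r → r < t → ∀ z : ℝ,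
      e x s z r + e z r y t =
        e x s (Z x s y t r) r + e (Z x s y t r) r y t → z ≤ Z x s y t r)
    (hZcont : ∀ x s y t : ℝ, s < t → ContinuousOn (Z x s y t) (Set.Icc s t))
    (hZs : ∀ x s y t : ℝ, s < t → Z x s y t s = x)
    (hZt : ∀ x s y t : ℝ, s < t → Z x s y t t = y) :
    ∀ x x' y y' s t : ℝ, s < t → x < x' → y < y' →
      e x s y' t + e x' s y t ≤ e x s y t + e x' s y' t := by
  intro x x' y y' s t hst hxx hyy
  -- the difference of the two maximizer curves
  set f : ℝ → ℝ := fun r => Z x s y' t r - Z x' s y t r with hf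
  have hfc : ContinuousOn f (Set.Icc s t) :=
    (hZcont x s y' t hst).sub (hZcont x' s y t hst)
  have hfs : f s = x - x' := by simp [hf, hZs x s y' t hst, hZs x' s y t hst]
  have hft : f t = y' - y := by simp [hf, hZt x s y' t hst, hZt x' s y t hst]
  have h0 : (0 : ℝ) ∈ Set.Icc (f s) (f t) := by
    constructor <;> [rw [hfs]; rw [hft]] <;> linarith
  obtain ⟨r, hr, hfr⟩ := intermediate_value_Icc hst.le hfc h0
  have hrs : s < r := by
    rcases lt_or_eq_of_le hr.1 with h | h
    · exact h
    · exfalso; rw [← h] at hfr; rw [hfs] at hfr; linarith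
  have hrt : r < t := by
    rcases lt_or_eq_of_le hr.2 with h | h
    · exact h
    · exfalso; rw [h] at hfr; rw [hft] at hfr; linarith
  set z := Z x s y' t r with hz
  have hzz : Z x' s y t r = z := by
    have : f r = 0 := hfr
    simp only [hf] at this
    linarith
  -- e x s y' t splits through z
  have hsplit : ∀ a b : ℝ, e a s b t =
      e a s (Z a s b t r) r + e (Z a s b t r) r b t := by
    intro a b
    obtain ⟨w, hw⟩ := hcomp a s b t r hrs hrt
    have h1 : e a s w r + e w r b t ≤
        e a s (Z a s b t r) r + e (Z a s b t r) r b t :=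
      hZmax a s b t r hrs hrt w
    have h2 : e a s (Z a s b t r) r + e (Z a s b t r) r b t ≤ e a s b t :=
      htri a s (Z a s b t r) r b t hrs hrt
    linarith
  have h1 : e x s y' t = e x s z r + e z r y' t := hsplit x y'
  have h2 : e x' s y t = e x' s z r + e z r y t := by
    have := hsplit x' y
    rwa [hzz] at this
  have h3 : e x s z r + e z r y t ≤ e x s y t := htri x s z r y t hrs hrt
  have h4 : e x' s z r + e z r y' t ≤ e x' s y' t := htri x' s z r y' t hrs hrt
  linarith
end

section
/- Let f:[0,1] → ℝ be absolutely continuous with f(0) = f(1) = 0 and square-integrable derivative. Suppose w:[0,1] → ℝ is absolutely continuous with w(0) = 0, satisfies w(t) - w(s) ≥ -(f(t)-f(s))²/(t-s) for all 0 ≤ s < t ≤ 1, and w' + (f')² ≥ 0 a.e. Then (4/3)∫_0^1 (w'(t) + f'(t)²)^{3/2} dt ≥ (4/3)(∫_0^1 f'(t)² dt)^{3/2}. -/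
/-!
The constraint at `s = 0`, `t = 1` gives `w 1 ≥ 0` because `f 0 = f 1`, so
`∫₀¹ (w' + f'²) = w 1 + ∫₀¹ f'² ≥ ∫₀¹ f'²`. Jensen's inequality for the convex map `x ↦ x ^ (3/2)`
on the probability space `(0, 1]` then bounds `(∫₀¹ (w' + f'²)) ^ (3/2)` by `∫₀¹ (w' + f'²) ^ (3/2)`.
-/

open MeasureTheory

theorem rpow_lintegral_le_lintegral_rpow {α : Type*} [MeasurableSpace α] {μ : Measure α}
    [IsProbabilityMeasure μ] {g : α → ENNReal} (hg : AEMeasurable g μ) {p : ℝ} (hp : 1 ≤ p) :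
    (∫⁻ a, g a ∂μ) ^ p ≤ ∫⁻ a, g a ^ p ∂μ := by
  have hL1_le_Lp : eLpNorm' g 1 μ ≤ eLpNorm' g p μ :=
    eLpNorm'_le_eLpNorm'_of_exponent_le one_pos hp μ hg.aestronglyMeasurable
  simp only [eLpNorm', enorm_eq_self, ENNReal.rpow_one, div_one] at hL1_le_Lp
  calc (∫⁻ a, g a ∂μ) ^ p ≤ ((∫⁻ a, g a ^ p ∂μ) ^ (1 / p)) ^ p := by gcongr
    _ = ∫⁻ a, g a ^ p ∂μ := by
      rw [← ENNReal.rpow_mul, one_div_mul_cancel (by positivity), ENNReal.rpow_one]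

instance isProbabilityMeasure_restrict_Ioc_zero_one :
    IsProbabilityMeasure (volume.restrict (Set.Ioc (0:ℝ) 1)) :=
  ⟨by simp⟩

theorem geodesic_rate_lower_bound_general (f f' w w' : ℝ → ℝ)
    (hf0 : f 0 = 0) (hf1 : f 1 = 0)
    (hfsq : IntegrableOn (fun t => (f' t)^2) (Set.Icc (0:ℝ) 1))
    (hw0 : w 0 = 0)
    (hwint : IntegrableOn w' (Set.Icc (0:ℝ) 1))
    (hwftc : ∀ s t : ℝ, 0 ≤ s → s ≤ t → t ≤ 1 → w t - w s = ∫ u in s..t, w' u)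
    (hconstr : ∀ s t : ℝ, 0 ≤ s → s < t → t ≤ 1 →
      -(f t - f s)^2 / (t - s) ≤ w t - w s)
    (hpos : ∀ᵐ t ∂(volume.restrict (Set.Ioc (0:ℝ) 1)), 0 ≤ w' t + (f' t)^2) :
    ENNReal.ofReal ((4/3) * (∫ t in Set.Ioc (0:ℝ) 1, (f' t)^2) ^ ((3:ℝ)/2)) ≤
      (4/3 : ENNReal) * ∫⁻ t in Set.Ioc (0:ℝ) 1,
        ENNReal.ofReal (w' t + (f' t)^2) ^ ((3:ℝ)/2) := by
  have hw'I : IntegrableOn w' (Set.Ioc 0 1) := hwint.mono_set Set.Ioc_subset_Icc_self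
  have hf'I : IntegrableOn (fun t => (f' t)^2) (Set.Ioc 0 1) :=
    hfsq.mono_set Set.Ioc_subset_Icc_self
  have hgI : IntegrableOn (fun t => w' t + (f' t)^2) (Set.Ioc 0 1) := hw'I.add hf'I
  have hw1 : 0 ≤ w 1 := by simpa [hf0, hf1, hw0] using hconstr 0 1 le_rfl one_pos le_rfl
  have hw'_integral : ∫ t in Set.Ioc 0 1, w' t = w 1 := by
    simpa [hw0, intervalIntegral.integral_of_le zero_le_one] using
      (hwftc 0 1 le_rfl zero_le_one le_rfl).symm
  have hmass : ∫ t in Set.Ioc 0 1, (f' t)^2 ≤ ∫ t in Set.Ioc 0 1, (w' t + (f' t)^2) := by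
    rw [integral_add hw'I hf'I, hw'_integral]
    linarith
  have hf'_nonneg : 0 ≤ ∫ t in Set.Ioc (0:ℝ) 1, (f' t)^2 := integral_nonneg fun t => sq_nonneg _
  calc ENNReal.ofReal ((4/3) * (∫ t in Set.Ioc (0:ℝ) 1, (f' t)^2) ^ ((3:ℝ)/2))
      = 4/3 * ENNReal.ofReal (∫ t in Set.Ioc (0:ℝ) 1, (f' t)^2) ^ ((3:ℝ)/2) := by
        rw [ENNReal.ofReal_mul (by norm_num), ENNReal.ofReal_rpow_of_nonneg hf'_nonneg (by norm_num),
          ENNReal.ofReal_div_of_pos (by norm_num)]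
        norm_num
    _ ≤ 4/3 * ENNReal.ofReal (∫ t in Set.Ioc 0 1, (w' t + (f' t)^2)) ^ ((3:ℝ)/2) := by
        gcongr
    _ = 4/3 * (∫⁻ t in Set.Ioc 0 1, ENNReal.ofReal (w' t + (f' t)^2)) ^ ((3:ℝ)/2) := by
        rw [ofReal_integral_eq_lintegral_ofReal hgI hpos]
    _ ≤ 4/3 * ∫⁻ t in Set.Ioc 0 1, ENNReal.ofReal (w' t + (f' t)^2) ^ ((3:ℝ)/2) := by
        gcongr
        exact rpow_lintegral_le_lintegral_rpow hgI.aemeasurable.ennreal_ofReal (by norm_num)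

/-- Lower bound for the geodesic rate function:
`(4/3)∫_0^1 (w' + (f')²)^{3/2} ≥ (4/3)(∫_0^1 (f')²)^{3/2}` for admissible weights `w`. -/
theorem geodesic_rate_lower_bound (f f' w w' : ℝ → ℝ)
    (hf0 : f 0 = 0) (hf1 : f 1 = 0)
    (hfint : IntegrableOn f' (Set.Icc (0:ℝ) 1))
    (hfsq : IntegrableOn (fun t => (f' t)^2) (Set.Icc (0:ℝ) 1))
    (hfftc : ∀ s t : ℝ, 0 ≤ s → s ≤ t → t ≤ 1 → f t - f s = ∫ u in s..t, f' u)
    (hw0 : w 0 = 0)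
    (hwint : IntegrableOn w' (Set.Icc (0:ℝ) 1))
    (hwftc : ∀ s t : ℝ, 0 ≤ s → s ≤ t → t ≤ 1 → w t - w s = ∫ u in s..t, w' u)
    (hconstr : ∀ s t : ℝ, 0 ≤ s → s < t → t ≤ 1 →
      -(f t - f s)^2 / (t - s) ≤ w t - w s)
    (hpos : ∀ᵐ t ∂(volume.restrict (Set.Ioc (0:ℝ) 1)), 0 ≤ w' t + (f' t)^2) :
    ENNReal.ofReal ((4/3) * (∫ t in Set.Ioc (0:ℝ) 1, (f' t)^2) ^ ((3:ℝ)/2)) ≤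
      (4/3 : ENNReal) * ∫⁻ t in Set.Ioc (0:ℝ) 1,
        ENNReal.ofReal (w' t + (f' t)^2) ^ ((3:ℝ)/2) :=
  geodesic_rate_lower_bound_general f f' w w' hf0 hf1 hfsq hw0 hwint hwftc hconstr hpos
end

section
/- For α > 0, define I(p,t) = (4/3)[t·p^{3/2} + 2(α - pt + (1-t)^{-1})^{3/2}/√(1-t)] for t ∈ (0,1) and p ≥ 0 with pt ≤ α + (1-t)^{-1}. Then the minimum of I(p,t) over p is attained at p*(t) = 4(α + (1-t)^{-1})/(1+3t), and the minimum over t ∈ (0,1) of I(p*(t), t) is attained at t* = (√(1+1/α) - √(1/α))², with minimal value (4/3) + 2α + (4/3)(1+α)^{3/2}. -/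
/-!
For fixed `t`, write `A = α + (1 - t)⁻¹` and `c = 2 / √(1 - t)`; the cost is
`(4/3) (t p^{3/2} + c (A - p t)^{3/2})`. Adding the tangent-line inequalities of the convex
function `x ↦ x^{3/2}` at `p*` and at `A - p* t` gives minimality of `p*`, because `p*` is
the stationary point `√p* = c √(A - p* t)`. At `p*` the cost is `(8/3) A √(A / (1 + 3t))`.
With `α = b² - 1` and `u = 1 - t` one has `t* = (b - 1)/(b + 1)`, and after squaring and
clearing denominators minimality of `t*` is a polynomial inequality in `b` and `u` whose
difference is `((b + 1) u - 2)²` times a quadratic in `u` with nonnegative coefficients.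
-/

open Real Set

lemma rpow_three_halves {x : ℝ} (hx : 0 ≤ x) : x ^ ((3:ℝ)/2) = x * √x := by
  rw [rpow_div_two_eq_sqrt _ hx, show (3:ℝ) = (3:ℕ) by norm_num, rpow_natCast, pow_succ,
    sq_sqrt hx]

lemma rpow_three_halves_tangent_le {x y : ℝ} (hx : 0 ≤ x) (hy : 0 ≤ y) :
    y ^ ((3:ℝ)/2) + 3/2 * √y * (x - y) ≤ x ^ ((3:ℝ)/2) := by
  rw [rpow_three_halves hx, rpow_three_halves hy]
  have key : √y ^ 2 * √y + 3/2 * √y * (√x ^ 2 - √y ^ 2) ≤ √x ^ 2 * √x := by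
    linear_combination mul_nonneg (sq_nonneg (√x - √y)) (by positivity : 0 ≤ √x + √y / 2)
  rwa [sq_sqrt hx, sq_sqrt hy] at key

lemma add_mul_rpow_three_halves_le_of_sqrt_eq {t c A p q : ℝ} (ht : 0 ≤ t) (hc : 0 ≤ c)
    (hp : 0 ≤ p) (hq : 0 ≤ q) (hpA : p * t ≤ A) (hqA : q * t ≤ A)
    (hstat : √q = c * √(A - q * t)) :
    t * q ^ ((3:ℝ)/2) + c * (A - q * t) ^ ((3:ℝ)/2)
      ≤ t * p ^ ((3:ℝ)/2) + c * (A - p * t) ^ ((3:ℝ)/2) := by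
  have hp' := mul_le_mul_of_nonneg_left (rpow_three_halves_tangent_le hp hq) ht
  have hr' := mul_le_mul_of_nonneg_left
    (rpow_three_halves_tangent_le (sub_nonneg.2 hpA) (sub_nonneg.2 hqA)) hc
  linear_combination hp' + hr' - 3/2 * t * (p - q) * hstat

noncomputable section

namespace YStructure

def cost (α p t : ℝ) : ℝ :=
  (4/3) * (t * p ^ ((3:ℝ)/2) + 2 * (α - p * t + (1 - t)⁻¹) ^ ((3:ℝ)/2) / √(1 - t))

def pStar (α t : ℝ) : ℝ := 4 * (α + (1 - t)⁻¹) / (1 + 3 * t)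

def tStar (α : ℝ) : ℝ := (√(1 + 1/α) - √(1/α)) ^ 2

variable {α t : ℝ}

lemma cost_eq (p : ℝ) : cost α p t =
    4/3 * (t * p ^ ((3:ℝ)/2) + 2 / √(1 - t) * (α + (1 - t)⁻¹ - p * t) ^ ((3:ℝ)/2)) := by
  rw [cost, show α - p * t + (1 - t)⁻¹ = α + (1 - t)⁻¹ - p * t by ring]
  ring

lemma pStar_eq : pStar α t = 4 * ((α + (1 - t)⁻¹) / (1 + 3 * t)) := mul_div_assoc ..

lemma sub_pStar_mul (ht : t ∈ Ioo 0 1) :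
    α + (1 - t)⁻¹ - pStar α t * t = (1 - t) * ((α + (1 - t)⁻¹) / (1 + 3 * t)) := by
  have h3 : 1 + 3 * t ≠ 0 := by linarith [ht.1]
  rw [pStar, div_mul_eq_mul_div, sub_div' h3]
  ring

lemma sqrt_pStar (ht : t ∈ Ioo 0 1) :
    √(pStar α t) = 2 / √(1 - t) * √(α + (1 - t)⁻¹ - pStar α t * t) := by
  have h1t : 0 < 1 - t := by linarith [ht.2]
  rw [sub_pStar_mul ht, pStar_eq, ← sqrt_sq (by positivity : (0:ℝ) ≤ 2 / √(1 - t)),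
    ← sqrt_mul (sq_nonneg _)]
  congr 1
  rw [div_pow, sq_sqrt h1t.le]
  field_simp
  ring

lemma cost_pStar_le (ht : t ∈ Ioo 0 1) {p : ℝ} (hp : 0 ≤ p) (hpt : p * t ≤ α + (1 - t)⁻¹) :
    cost α (pStar α t) t ≤ cost α p t := by
  have hA : 0 ≤ α + (1 - t)⁻¹ := le_trans (mul_nonneg hp ht.1.le) hpt
  have hrest : 0 ≤ α + (1 - t)⁻¹ - pStar α t * t := by
    rw [sub_pStar_mul ht]
    exact mul_nonneg (by linarith [ht.2]) (div_nonneg hA (by linarith [ht.1]))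
  rw [cost_eq, cost_eq]
  gcongr 4/3 * ?_
  exact add_mul_rpow_three_halves_le_of_sqrt_eq ht.1.le (by positivity) hp
    (by rw [pStar_eq]; exact mul_nonneg zero_le_four (div_nonneg hA (by linarith [ht.1])))
    hpt (sub_nonneg.1 hrest) (sqrt_pStar ht)

lemma cost_pStar (ht : t ∈ Ioo 0 1) (hA : 0 ≤ α + (1 - t)⁻¹) :
    cost α (pStar α t) t = 8/3 * (α + (1 - t)⁻¹) * √((α + (1 - t)⁻¹) / (1 + 3 * t)) := by
  have h1t : 0 < 1 - t := by linarith [ht.2]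
  have h3t : 0 < 1 + 3 * t := by linarith [ht.1]
  have hs : 0 ≤ (α + (1 - t)⁻¹) / (1 + 3 * t) := by positivity
  rw [cost_eq, sub_pStar_mul ht, pStar_eq, rpow_three_halves (by positivity),
    rpow_three_halves (by positivity), sqrt_mul zero_le_four, sqrt_mul h1t.le,
    show (4:ℝ) = 2 ^ 2 by norm_num, sqrt_sq zero_le_two]
  field_simp
  ring

variable {b : ℝ}

lemma tStar_sq_sub_one (hb : 1 < b) : tStar (b ^ 2 - 1) = (b - 1) / (b + 1) := by
  have hd : 0 < b ^ 2 - 1 := by nlinarith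
  have h1 : √(1 + 1 / (b ^ 2 - 1)) = b / √(b ^ 2 - 1) := by
    rw [show 1 + 1 / (b ^ 2 - 1) = b ^ 2 / (b ^ 2 - 1) by field_simp; ring, sqrt_div' _ hd.le,
      sqrt_sq (by linarith)]
  rw [tStar, h1, one_div, sqrt_inv, ← one_div, div_sub_div_same, div_pow, sq_sqrt hd.le]
  have : b + 1 ≠ 0 := by linarith
  have : b - 1 ≠ 0 := by linarith
  field_simp
  ring

lemma tStar_mem_Ioo (hb : 1 < b) : tStar (b ^ 2 - 1) ∈ Ioo 0 1 := by
  rw [tStar_sq_sub_one hb]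
  exact ⟨div_pos (by linarith) (by linarith), (div_lt_one (by linarith)).2 (by linarith)⟩

lemma cost_pStar_tStar (hb : 1 < b) :
    cost (b ^ 2 - 1) (pStar (b ^ 2 - 1) (tStar (b ^ 2 - 1))) (tStar (b ^ 2 - 1))
      = 2/3 * (b + 1) ^ 2 * (2 * b - 1) := by
  have hA : b ^ 2 - 1 + (1 - tStar (b ^ 2 - 1))⁻¹ = (b + 1) * (2 * b - 1) / 2 := by
    rw [tStar_sq_sub_one hb]
    have : b + 1 ≠ 0 := by linarith
    field_simp
    ring
  have hq : (b + 1) * (2 * b - 1) / 2 / (1 + 3 * tStar (b ^ 2 - 1)) = ((b + 1) / 2) ^ 2 := by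
    have : b + 1 ≠ 0 := by linarith
    have : 2 * b - 1 ≠ 0 := by linarith
    rw [tStar_sq_sub_one hb, show 1 + 3 * ((b - 1) / (b + 1)) = 2 * (2 * b - 1) / (b + 1) by
      field_simp; ring, div_eq_iff (by positivity)]
    field_simp
  rw [cost_pStar (tStar_mem_Ioo hb) (by rw [hA]; nlinarith), hA, hq, sqrt_sq (by linarith)]
  ring

lemma min_over_t_poly_ineq {u : ℝ} (hb : 1 ≤ b) (hu : 0 ≤ u) :
    (b + 1) ^ 4 * (2 * b - 1) ^ 2 * u ^ 3 * (4 - 3 * u) ≤ 16 * ((b ^ 2 - 1) * u + 1) ^ 3 := by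
  have h1 : 0 ≤ 12 * b ^ 2 + 4 * b - 8 := by nlinarith
  have h2 : 0 ≤ 12 * b ^ 4 + 12 * b ^ 3 - 9 * b ^ 2 - 6 * b + 3 := by
    nlinarith [sq_nonneg (b - 1), sq_nonneg b]
  have hS : 0 ≤ 4 + (12 * b ^ 2 + 4 * b - 8) * u
      + (12 * b ^ 4 + 12 * b ^ 3 - 9 * b ^ 2 - 6 * b + 3) * u ^ 2 := by
    nlinarith [mul_nonneg h1 hu, mul_nonneg h2 (sq_nonneg u)]
  linear_combination mul_nonneg (sq_nonneg ((b + 1) * u - 2)) hS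

lemma cost_pStar_tStar_le (hb : 1 < b) (ht : t ∈ Ioo 0 1) :
    cost (b ^ 2 - 1) (pStar (b ^ 2 - 1) (tStar (b ^ 2 - 1))) (tStar (b ^ 2 - 1))
      ≤ cost (b ^ 2 - 1) (pStar (b ^ 2 - 1) t) t := by
  have h1t : 0 < 1 - t := by linarith [ht.2]
  have h3t : 0 < 1 + 3 * t := by linarith [ht.1]
  have hA : b ^ 2 - 1 + (1 - t)⁻¹ = ((b ^ 2 - 1) * (1 - t) + 1) / (1 - t) := by
    field_simp
  have hA0 : 0 ≤ ((b ^ 2 - 1) * (1 - t) + 1) / (1 - t) := by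
    have : 0 ≤ b ^ 2 - 1 := by nlinarith
    positivity
  rw [cost_pStar_tStar hb, cost_pStar ht (hA ▸ hA0), hA]
  refine le_of_pow_le_pow_left₀ two_ne_zero (by positivity) ?_
  rw [mul_pow, mul_pow _ √_, sq_sqrt (div_nonneg hA0 h3t.le),
    show 1 + 3 * t = 4 - 3 * (1 - t) by ring]
  have h4 : 0 < 4 - 3 * (1 - t) := by linarith
  generalize 1 - t = u at h1t h4 ⊢
  rw [show (8/3 * (((b ^ 2 - 1) * u + 1) / u)) ^ 2 * (((b ^ 2 - 1) * u + 1) / u / (4 - 3 * u))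
      = 64/9 * ((b ^ 2 - 1) * u + 1) ^ 3 / (u ^ 3 * (4 - 3 * u)) by field_simp; ring,
    le_div_iff₀ (by positivity)]
  linarith [min_over_t_poly_ineq hb.le h1t.le]

end YStructure

end

/-- The two-point 'Y-structure' optimization: with
`I(p,t) = (4/3)[t p^{3/2} + 2(α - pt + (1-t)⁻¹)^{3/2}/√(1-t)]`, the minimum over
`p ≥ 0` is attained at `p*(t) = 4(α + (1-t)⁻¹)/(1+3t)`, the minimum over `t`
of `I(p*(t),t)` is attained at `t* = (√(1+1/α) - √(1/α))²`, and the minimal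
value is `4/3 + 2α + (4/3)(1+α)^{3/2}`. -/
theorem two_point_Y_optimization (α : ℝ) (hα : 0 < α) :
    let I : ℝ → ℝ → ℝ := fun p t =>
      (4/3) * (t * p ^ ((3:ℝ)/2) +
        2 * (α - p * t + (1 - t)⁻¹) ^ ((3:ℝ)/2) / Real.sqrt (1 - t))
    let pstar : ℝ → ℝ := fun t => 4 * (α + (1 - t)⁻¹) / (1 + 3 * t)
    let tstar : ℝ := (Real.sqrt (1 + 1/α) - Real.sqrt (1/α))^2
    -- `t*` is admissible
    (tstar ∈ Set.Ioo (0:ℝ) 1) ∧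
    -- minimization over `p` at fixed `t`
    (∀ t ∈ Set.Ioo (0:ℝ) 1, ∀ p : ℝ, 0 ≤ p → p * t ≤ α + (1 - t)⁻¹ →
      I (pstar t) t ≤ I p t) ∧
    -- minimization over `t`
    (∀ t ∈ Set.Ioo (0:ℝ) 1, I (pstar tstar) tstar ≤ I (pstar t) t) ∧
    -- the minimal value
    I (pstar tstar) tstar = 4/3 + 2*α + (4/3) * (1 + α) ^ ((3:ℝ)/2) := by
  intro I pstar tstar
  obtain ⟨b, hb, rfl⟩ : ∃ b, 1 < b ∧ α = b ^ 2 - 1 :=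
    ⟨√(1 + α), (lt_sqrt zero_le_one).2 (by linarith), by rw [sq_sqrt (by linarith)]; ring⟩
  refine ⟨YStructure.tStar_mem_Ioo hb,
    fun t ht p hp hpt => YStructure.cost_pStar_le ht hp hpt,
    fun t ht => YStructure.cost_pStar_tStar_le hb ht,
    (YStructure.cost_pStar_tStar hb).trans ?_⟩
  rw [add_sub_cancel, rpow_three_halves (sq_nonneg b), sqrt_sq (by linarith)]
  ring
end
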